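/- arXiv:2410.05171 — 7 statements merged into one kernel-verified Lean document; each statement's English description precedes it below -/
import Mathlib

section
/- Full-protocol residual error: Let H_X ∈ 𝔽₂^{m_X×n} and H_Z ∈ 𝔽₂^{m_Z×n} satisfy H_X·H_Zᵀ = 0, let d = ℓ ≥ 2, and form the thickened matrices H̃_X, H̃_Z, M̃_Z from the length-d repetition code. Assume: (i) H̃_Z is (d, x ↦ x³/4)-sound relative to H̃_X; (ii) ker M̃_Z equals the column space of H̃_Z; (iii) H_X is (t,f)-confined relative to H_Z with f : ℕ → ℝ monotone increasing and d > t. Stage 1: for any e ∈ 𝔽₂^{nd+m_X(d−1)}, any s_e ∈ 𝔽₂^{m_Zd+n(d−1)} with 2|s_e| ≤ d, and any vector ŝ of minimum Hamming weight subject to M̃_Z(H̃_Z e + s_e + ŝ) = 0, there exists ê with H̃_Z ê = H̃_Z e + s_e + ŝ such that the boundary restriction e_X := (e+ê)^{(1)} ∈ 𝔽₂ⁿ satisfies ‖e_X‖_{H_X} ≤ 2|s_e|³. Stage 2: for any e¹,…,e^{d−1} ∈ 𝔽₂ⁿ and s_e¹,…,s_e^{d−1} ∈ 𝔽₂^{m_X}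 with ‖e^τ‖_{H_Z} ≤ t/4 and f(2|s_e^τ|) ≤ t/4 for all τ, defining ē¹ = e¹ and, for τ = 1,…,d−1, letting ŝ^τ be any minimum-Hamming-weight vector such that some e′ with ‖e′‖_{H_Z} ≤ t/2 satisfies H_X e′ = H_X ē^τ + s_e^τ + ŝ^τ, letting ê^τ be any minimum-Hamming-weight vector with H_X ê^τ = H_X ē^τ + s_e^τ + ŝ^τ, and setting ē^{τ+1} = e^{τ+1} + ē^τ + ê^τ for τ < d−1, the residual Z error e_Z := ē^{d−1} + ê^{d−1} satisfies ‖e_Z‖_{H_Z} ≤ t/4 ≤ d/4. -/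
open Matrix Kronecker

/-- The row space of a matrix over 𝔽₂: the span of its rows. -/
def rowSpace {m n : Type*} (A : Matrix m n (ZMod 2)) :
    Submodule (ZMod 2) (n → ZMod 2) :=
  Submodule.span (ZMod 2) (Set.range A)

/-- The reduced weight of a vector `v` relative to a matrix `A`:
`‖v‖_A = min { |v+u| : u ∈ rs(A) }`. -/
noncomputable def redW {m n : Type*} [Fintype n] (A : Matrix m n (ZMod 2))
    (v : n → ZMod 2) : ℕ :=
  sInf {k | ∃ u ∈ rowSpace A, hammingNorm (v + u) = k}

/-- `H` is `(t,f)`-sound relative to `A`. -/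
def Sound {m n a : Type*} [Fintype m] [Fintype n] (t : ℕ) (f : ℕ → ℝ)
    (H : Matrix m n (ZMod 2)) (A : Matrix a n (ZMod 2)) : Prop :=
  ∀ s : m → ZMod 2, (∃ e, H.mulVec e = s) → hammingNorm s ≤ t →
    ∃ e, H.mulVec e = s ∧ (redW A e : ℝ) ≤ f (hammingNorm s)

/-- `H` is `(t,f)`-confined relative to `A`. -/
def Confined {m n a : Type*} [Fintype m] [Fintype n] (t : ℕ) (f : ℕ → ℝ)
    (H : Matrix m n (ZMod 2)) (A : Matrix a n (ZMod 2)) : Prop :=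
  ∀ e : n → ZMod 2, redW A e ≤ t → (redW A e : ℝ) ≤ f (hammingNorm (H.mulVec e))

/-- Parity-check matrix of the length-`ℓ` repetition code. -/
def repH (ℓ : ℕ) : Matrix (Fin (ℓ - 1)) (Fin ℓ) (ZMod 2) :=
  Matrix.of fun j i => if i.val = j.val ∨ i.val = j.val + 1 then 1 else 0

/-- Thickened X-check matrix `H̃_X = ( H_X⊗I_ℓ | I_{m_X}⊗hᵀ )`. -/
def thickHX {mX n : ℕ} (HX : Matrix (Fin mX) (Fin n) (ZMod 2)) (ℓ : ℕ) :
    Matrix (Fin mX × Fin ℓ) ((Fin n × Fin ℓ) ⊕ (Fin mX × Fin (ℓ - 1))) (ZMod 2) :=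
  Matrix.fromCols (HX ⊗ₖ (1 : Matrix (Fin ℓ) (Fin ℓ) (ZMod 2)))
    ((1 : Matrix (Fin mX) (Fin mX) (ZMod 2)) ⊗ₖ (repH ℓ)ᵀ)

/-- Thickened Z-check matrix `H̃_Z = [[ H_Z⊗I_ℓ , 0 ],[ I_n⊗h , H_Xᵀ⊗I_{ℓ−1} ]]`. -/
def thickHZ {mX mZ n : ℕ} (HX : Matrix (Fin mX) (Fin n) (ZMod 2))
    (HZ : Matrix (Fin mZ) (Fin n) (ZMod 2)) (ℓ : ℕ) :
    Matrix ((Fin mZ × Fin ℓ) ⊕ (Fin n × Fin (ℓ - 1)))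
      ((Fin n × Fin ℓ) ⊕ (Fin mX × Fin (ℓ - 1))) (ZMod 2) :=
  Matrix.fromBlocks (HZ ⊗ₖ (1 : Matrix (Fin ℓ) (Fin ℓ) (ZMod 2))) 0
    ((1 : Matrix (Fin n) (Fin n) (ZMod 2)) ⊗ₖ repH ℓ)
    (HXᵀ ⊗ₖ (1 : Matrix (Fin (ℓ - 1)) (Fin (ℓ - 1)) (ZMod 2)))

/-- Metacheck matrix `M̃_Z = ( I_{m_Z}⊗h | H_Z⊗I_{ℓ−1} )`. -/
def metaMZ {mZ n : ℕ} (HZ : Matrix (Fin mZ) (Fin n) (ZMod 2)) (ℓ : ℕ) :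
    Matrix (Fin mZ × Fin (ℓ - 1))
      ((Fin mZ × Fin ℓ) ⊕ (Fin n × Fin (ℓ - 1))) (ZMod 2) :=
  Matrix.fromCols ((1 : Matrix (Fin mZ) (Fin mZ) (ZMod 2)) ⊗ₖ repH ℓ)
    (HZ ⊗ₖ (1 : Matrix (Fin (ℓ - 1)) (Fin (ℓ - 1)) (ZMod 2)))

/-- Sheet-`τ` component of a vector on the thickened qubit space. -/
def sheet {n ℓ mX : ℕ} (τ : Fin ℓ)
    (v : (Fin n × Fin ℓ) ⊕ (Fin mX × Fin (ℓ - 1)) → ZMod 2) : Fin n → ZMod 2 :=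
  fun i => v (Sum.inl (i, τ))

/-!
Both stages rest on the same observation: a minimum-weight syndrome correction `ŝ` competes with
the true syndrome error `s`, so `|ŝ| ≤ |s|` and the effective syndrome error `s + ŝ` has weight at
most `2|s|`.

In stage 1 the vector `s_e + ŝ` is a syndrome of `H̃_Z` (by exactness of the metacheck), of weight
at most `2|s_e| ≤ d`, so soundness yields a correction whose residual has reduced weight at most
`(2|s_e|)³/4` relative to `H̃_X`; restricting to the boundary sheet maps `rs(H̃_X)` into `rs(H_X)`,
so the reduced weight only drops.

In stage 2 one shows `‖ē^τ‖_{H_Z} ≤ t/2` by induction. The minimum-weight solution `ê^τ` weighs no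
more than the reduced weight of the witness `e′` (shifting `e′` by `rs(H_Z)` does not change its
`H_X`-syndrome), so `‖ē^τ + ê^τ‖_{H_Z} ≤ t`; confinement then bounds it by
`f(2|s_e^τ|) ≤ t/4`, and the fresh error `e^{τ+1}` adds at most another `t/4`.
-/

theorem hammingNorm_add_le {ι : Type*} [Fintype ι] {β : ι → Type*} [∀ i, AddZeroClass (β i)]
    [∀ i, DecidableEq (β i)] (x y : ∀ i, β i) :
    hammingNorm (x + y) ≤ hammingNorm x + hammingNorm y := by
  classical
  refine (Finset.card_le_card fun i hi => ?_).trans (Finset.card_union_le _ _)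
  simp only [Finset.mem_filter, Finset.mem_univ, true_and, Finset.mem_union] at hi ⊢
  by_contra! h
  simp [h.1, h.2] at hi

theorem hammingNorm_add_le_two_mul {ι : Type*} [Fintype ι] {β : ι → Type*}
    [∀ i, AddZeroClass (β i)] [∀ i, DecidableEq (β i)] {x y : ∀ i, β i}
    (h : hammingNorm y ≤ hammingNorm x) : hammingNorm (x + y) ≤ 2 * hammingNorm x :=
  (hammingNorm_add_le x y).trans (by omega)

theorem hammingNorm_comp_le_of_injective {ι κ β : Type*} [Fintype ι] [Fintype κ] [Zero β]
    [DecidableEq β] {g : κ → ι} (hg : Function.Injective g) (x : ι → β) :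
    hammingNorm (x ∘ g) ≤ hammingNorm x :=
  Finset.card_le_card_of_injOn g (fun _ h => by simpa using h) hg.injOn

section ReducedWeight

variable {m n : Type*} [Fintype n]

theorem exists_hammingNorm_add_eq_redW (A : Matrix m n (ZMod 2)) (v : n → ZMod 2) :
    ∃ u ∈ rowSpace A, hammingNorm (v + u) = redW A v :=
  Nat.sInf_mem (s := {k | ∃ u ∈ rowSpace A, hammingNorm (v + u) = k})
    ⟨_, 0, Submodule.zero_mem _, rfl⟩

theorem redW_le_hammingNorm_add (A : Matrix m n (ZMod 2)) (v : n → ZMod 2) {u : n → ZMod 2}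
    (hu : u ∈ rowSpace A) : redW A v ≤ hammingNorm (v + u) :=
  Nat.sInf_le ⟨u, hu, rfl⟩

theorem redW_le_hammingNorm (A : Matrix m n (ZMod 2)) (v : n → ZMod 2) :
    redW A v ≤ hammingNorm v := by
  simpa using redW_le_hammingNorm_add A v (Submodule.zero_mem _)

theorem redW_add_le (A : Matrix m n (ZMod 2)) (v w : n → ZMod 2) :
    redW A (v + w) ≤ redW A v + redW A w := by
  obtain ⟨u, hu, hvu⟩ := exists_hammingNorm_add_eq_redW A v
  obtain ⟨u', hu', hwu'⟩ := exists_hammingNorm_add_eq_redW A w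
  calc redW A (v + w) ≤ hammingNorm (v + w + (u + u')) :=
        redW_le_hammingNorm_add A _ (Submodule.add_mem _ hu hu')
    _ = hammingNorm ((v + u) + (w + u')) := by abel_nf
    _ ≤ redW A v + redW A w := hvu ▸ hwu' ▸ hammingNorm_add_le _ _

theorem mulVec_eq_zero_of_mem_rowSpace {k : Type*} {B : Matrix k n (ZMod 2)}
    {A : Matrix m n (ZMod 2)} (hBA : B * Aᵀ = 0) {u : n → ZMod 2} (hu : u ∈ rowSpace A) :
    B *ᵥ u = 0 := by
  refine (Submodule.span_le (p := LinearMap.ker B.mulVecLin)).2 ?_ hu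
  rintro _ ⟨i, rfl⟩
  funext j
  simpa [Matrix.mulVec, Matrix.mul_apply'] using congrFun (congrFun hBA j) i

theorem hammingNorm_le_redW_of_forall_le {k : Type*} {B : Matrix k n (ZMod 2)}
    {A : Matrix m n (ZMod 2)} (hBA : B * Aᵀ = 0) {x y : n → ZMod 2}
    (hmin : ∀ z, B *ᵥ z = B *ᵥ y → hammingNorm x ≤ hammingNorm z) :
    hammingNorm x ≤ redW A y := by
  obtain ⟨u, hu, hyu⟩ := exists_hammingNorm_add_eq_redW A y
  exact hyu ▸ hmin _ (by rw [Matrix.mulVec_add, mulVec_eq_zero_of_mem_rowSpace hBA hu, add_zero])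

end ReducedWeight

section Sheet

variable {mX n ℓ : ℕ}

theorem sheet_mem_rowSpace (HX : Matrix (Fin mX) (Fin n) (ZMod 2)) (τ : Fin ℓ)
    {u : (Fin n × Fin ℓ) ⊕ (Fin mX × Fin (ℓ - 1)) → ZMod 2}
    (hu : u ∈ rowSpace (thickHX HX ℓ)) : sheet τ u ∈ rowSpace HX := by
  refine (Submodule.span_le (p := (rowSpace HX).comap
    (LinearMap.funLeft (ZMod 2) (ZMod 2) fun i => Sum.inl (i, τ)))).2 ?_ hu
  rintro _ ⟨⟨k, τ'⟩, rfl⟩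
  have hrow : sheet τ (thickHX HX ℓ (k, τ')) =
      (1 : Matrix (Fin ℓ) (Fin ℓ) (ZMod 2)) τ' τ • HX k := by
    funext i
    simp [sheet, thickHX, mul_comm]
  change sheet τ (thickHX HX ℓ (k, τ')) ∈ rowSpace HX
  exact hrow ▸ Submodule.smul_mem _ _ (Submodule.subset_span ⟨k, rfl⟩)

theorem redW_sheet_le (HX : Matrix (Fin mX) (Fin n) (ZMod 2)) (τ : Fin ℓ)
    (v : (Fin n × Fin ℓ) ⊕ (Fin mX × Fin (ℓ - 1)) → ZMod 2) :
    redW HX (sheet τ v) ≤ redW (thickHX HX ℓ) v := by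
  obtain ⟨u, hu, hvu⟩ := exists_hammingNorm_add_eq_redW (thickHX HX ℓ) v
  calc redW HX (sheet τ v) ≤ hammingNorm (sheet τ (v + u)) :=
        redW_le_hammingNorm_add _ _ (sheet_mem_rowSpace HX τ hu)
    _ ≤ redW (thickHX HX ℓ) v :=
        hvu ▸ hammingNorm_comp_le_of_injective (fun _ _ h => by simpa using h) _

end Sheet

theorem exists_redW_add_le_of_sound {m n a k : Type*} [Fintype m] [Fintype n] [Fintype k]
    {H : Matrix m n (ZMod 2)} {A : Matrix a n (ZMod 2)} {M : Matrix k m (ZMod 2)} {t : ℕ}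
    {g : ℕ → ℝ} (hsound : Sound t g H A) (hg : Monotone g)
    (hker : ∀ s, M *ᵥ s = 0 ↔ ∃ e, H *ᵥ e = s)
    (e : n → ZMod 2) {se shat : m → ZMod 2} (hse : 2 * hammingNorm se ≤ t)
    (hmeta : M *ᵥ (H *ᵥ e + se + shat) = 0)
    (hmin : ∀ s', M *ᵥ (H *ᵥ e + se + s') = 0 → hammingNorm shat ≤ hammingNorm s') :
    ∃ ehat, H *ᵥ ehat = H *ᵥ e + se + shat ∧
      (redW A (e + ehat) : ℝ) ≤ g (2 * hammingNorm se) := by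
  have hw : hammingNorm (se + shat) ≤ 2 * hammingNorm se := by
    refine hammingNorm_add_le_two_mul (hmin se ?_)
    rw [add_assoc, ZModModule.add_self, add_zero]
    exact (hker _).2 ⟨e, rfl⟩
  obtain ⟨e', he'⟩ := (hker _).1 hmeta
  have hsyn : H *ᵥ (e' - e) = se + shat := by
    rw [Matrix.mulVec_sub, he', add_assoc, add_sub_cancel_left]
  obtain ⟨e₀, he₀, hred⟩ := hsound _ ⟨_, hsyn⟩ (hw.trans hse)
  refine ⟨e + e₀, by rw [Matrix.mulVec_add, he₀, add_assoc], ?_⟩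
  rw [← add_assoc, ZModModule.add_self, zero_add]
  exact hred.trans (hg hw)

section Confined

variable {m n a : Type*} [Fintype m] [Fintype n]
  {HX : Matrix m n (ZMod 2)} {HZ : Matrix a n (ZMod 2)} {t : ℕ} {f : ℕ → ℝ}

theorem redW_add_le_of_confined (hCSS : HX * HZᵀ = 0) (hconf : Confined t f HX HZ)
    (hf : Monotone f) {ebar ehat : n → ZMod 2} {se shat : m → ZMod 2}
    (hbar : (redW HZ ebar : ℝ) ≤ t / 2) (hse : f (2 * hammingNorm se) ≤ t / 4)
    (hshat : ∃ e', (redW HZ e' : ℝ) ≤ t / 2 ∧ HX *ᵥ e' = HX *ᵥ ebar + se + shat)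
    (hshat_min : ∀ s', (∃ e', (redW HZ e' : ℝ) ≤ t / 2 ∧ HX *ᵥ e' = HX *ᵥ ebar + se + s') →
      hammingNorm shat ≤ hammingNorm s')
    (hehat : HX *ᵥ ehat = HX *ᵥ ebar + se + shat)
    (hehat_min : ∀ e', HX *ᵥ e' = HX *ᵥ ebar + se + shat → hammingNorm ehat ≤ hammingNorm e') :
    (redW HZ (ebar + ehat) : ℝ) ≤ t / 4 := by
  have hw : hammingNorm (se + shat) ≤ 2 * hammingNorm se :=
    hammingNorm_add_le_two_mul <|
      hshat_min se ⟨ebar, hbar, by rw [add_assoc, ZModModule.add_self, add_zero]⟩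
  obtain ⟨e', he'_red, he'⟩ := hshat
  have hehat_le : (hammingNorm ehat : ℝ) ≤ redW HZ e' := by
    exact_mod_cast hammingNorm_le_redW_of_forall_le hCSS fun z hz => hehat_min z (hz.trans he')
  have hsum : (redW HZ (ebar + ehat) : ℝ) ≤ redW HZ ebar + hammingNorm ehat := by
    exact_mod_cast (redW_add_le HZ ebar ehat).trans (by grw [redW_le_hammingNorm HZ ehat])
  have hsyn : HX *ᵥ (ebar + ehat) = se + shat := by
    rw [Matrix.mulVec_add, hehat, add_assoc (HX *ᵥ ebar), ← add_assoc, ZModModule.add_self,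
      zero_add]
  calc (redW HZ (ebar + ehat) : ℝ) ≤ f (hammingNorm (HX *ᵥ (ebar + ehat))) :=
        hconf _ (by exact_mod_cast (show (redW HZ (ebar + ehat) : ℝ) ≤ t by linarith))
    _ ≤ f (2 * hammingNorm se) := hf (hsyn ▸ hw)
    _ ≤ t / 4 := hse

theorem redW_residual_le_of_confined (hCSS : HX * HZᵀ = 0) (hconf : Confined t f HX HZ)
    (hf : Monotone f) (r : ℕ) (e ebar ehat : ℕ → n → ZMod 2) (se shat : ℕ → m → ZMod 2)
    (he : ∀ τ < r, (redW HZ (e τ) : ℝ) ≤ t / 4)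
    (hse : ∀ τ < r, f (2 * hammingNorm (se τ)) ≤ t / 4)
    (h0 : ebar 0 = e 0)
    (hshat : ∀ τ < r,
      (∃ e', (redW HZ e' : ℝ) ≤ t / 2 ∧ HX *ᵥ e' = HX *ᵥ ebar τ + se τ + shat τ) ∧
      ∀ s', (∃ e', (redW HZ e' : ℝ) ≤ t / 2 ∧ HX *ᵥ e' = HX *ᵥ ebar τ + se τ + s') →
        hammingNorm (shat τ) ≤ hammingNorm s')
    (hehat : ∀ τ < r, HX *ᵥ ehat τ = HX *ᵥ ebar τ + se τ + shat τ ∧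
      ∀ e', HX *ᵥ e' = HX *ᵥ ebar τ + se τ + shat τ → hammingNorm (ehat τ) ≤ hammingNorm e')
    (hrec : ∀ τ, τ + 1 < r → ebar (τ + 1) = e (τ + 1) + ebar τ + ehat τ) :
    ∀ τ < r, (redW HZ (ebar τ + ehat τ) : ℝ) ≤ t / 4 := by
  have round : ∀ τ < r, (redW HZ (ebar τ) : ℝ) ≤ t / 2 →
      (redW HZ (ebar τ + ehat τ) : ℝ) ≤ t / 4 := fun τ hτ hbar =>
    redW_add_le_of_confined hCSS hconf hf hbar (hse τ hτ) (hshat τ hτ).1 (hshat τ hτ).2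
      (hehat τ hτ).1 (hehat τ hτ).2
  have hbar : ∀ τ < r, (redW HZ (ebar τ) : ℝ) ≤ t / 2 := by
    intro τ
    induction τ with
    | zero =>
      intro h
      have := he 0 h
      rw [h0]
      linarith [(Nat.cast_nonneg t : (0 : ℝ) ≤ t)]
    | succ τ ih =>
      intro hτ
      have hsplit : (redW HZ (ebar (τ + 1)) : ℝ) ≤
          redW HZ (e (τ + 1)) + redW HZ (ebar τ + ehat τ) := by
        rw [hrec τ hτ, add_assoc]
        exact_mod_cast redW_add_le HZ _ _
      linarith [he (τ + 1) hτ, round τ (by omega) (ih (by omega))]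
  exact fun τ hτ => round τ hτ (hbar τ hτ)

end Confined

theorem full_protocol_residual_error
    {mX mZ n : ℕ}
    (HX : Matrix (Fin mX) (Fin n) (ZMod 2))
    (HZ : Matrix (Fin mZ) (Fin n) (ZMod 2))
    (hCSS : HX * HZᵀ = 0)
    (d : ℕ) (hd : 2 ≤ d)
    (t : ℕ) (f : ℕ → ℝ) (hf : Monotone f)
    -- (i) H̃_Z is (d, x ↦ x³/4)-sound relative to H̃_X
    (hsound : Sound d (fun x => (x : ℝ) ^ 3 / 4) (thickHZ HX HZ d) (thickHX HX d))
    -- (ii) ker M̃_Z equals the column space of H̃_Z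
    (hker : ∀ s : (Fin mZ × Fin d) ⊕ (Fin n × Fin (d - 1)) → ZMod 2,
      (metaMZ HZ d).mulVec s = 0 ↔ ∃ e, (thickHZ HX HZ d).mulVec e = s)
    -- (iii) H_X is (t,f)-confined relative to H_Z and d > t
    (hconf : Confined t f HX HZ) (hdt : t < d) :
    -- Stage 1
    (∀ (e : (Fin n × Fin d) ⊕ (Fin mX × Fin (d - 1)) → ZMod 2)
       (se shat : (Fin mZ × Fin d) ⊕ (Fin n × Fin (d - 1)) → ZMod 2),
      2 * hammingNorm se ≤ d →
      (metaMZ HZ d).mulVec ((thickHZ HX HZ d).mulVec e + se + shat) = 0 →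
      (∀ s' : (Fin mZ × Fin d) ⊕ (Fin n × Fin (d - 1)) → ZMod 2,
        (metaMZ HZ d).mulVec ((thickHZ HX HZ d).mulVec e + se + s') = 0 →
        hammingNorm shat ≤ hammingNorm s') →
      ∃ ehat, (thickHZ HX HZ d).mulVec ehat = (thickHZ HX HZ d).mulVec e + se + shat ∧
        (redW HX (sheet (⟨0, by omega⟩ : Fin d) (e + ehat)) : ℝ) ≤
          2 * (hammingNorm se : ℝ) ^ 3) ∧
    -- Stage 2
    (∀ (e ebar ehat : ℕ → Fin n → ZMod 2) (se shat : ℕ → Fin mX → ZMod 2),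
      (∀ τ < d - 1, (redW HZ (e τ) : ℝ) ≤ (t : ℝ) / 4) →
      (∀ τ < d - 1, f (2 * hammingNorm (se τ)) ≤ (t : ℝ) / 4) →
      ebar 0 = e 0 →
      (∀ τ < d - 1,
        (∃ e', (redW HZ e' : ℝ) ≤ (t : ℝ) / 2 ∧
          HX.mulVec e' = HX.mulVec (ebar τ) + se τ + shat τ) ∧
        (∀ s' : Fin mX → ZMod 2,
          (∃ e', (redW HZ e' : ℝ) ≤ (t : ℝ) / 2 ∧
            HX.mulVec e' = HX.mulVec (ebar τ) + se τ + s') →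
          hammingNorm (shat τ) ≤ hammingNorm s')) →
      (∀ τ < d - 1,
        HX.mulVec (ehat τ) = HX.mulVec (ebar τ) + se τ + shat τ ∧
        (∀ e' : Fin n → ZMod 2,
          HX.mulVec e' = HX.mulVec (ebar τ) + se τ + shat τ →
          hammingNorm (ehat τ) ≤ hammingNorm e')) →
      (∀ τ, τ + 1 < d - 1 → ebar (τ + 1) = e (τ + 1) + ebar τ + ehat τ) →
      (redW HZ (ebar (d - 2) + ehat (d - 2)) : ℝ) ≤ (t : ℝ) / 4 ∧
        (t : ℝ) / 4 ≤ (d : ℝ) / 4) := by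
  refine ⟨fun e se shat hse hmeta hmin => ?_,
    fun e ebar ehat se shat he hse h0 hshat hehat hrec => ⟨?_, ?_⟩⟩
  · obtain ⟨ehat, hsyn, hred⟩ := exists_redW_add_le_of_sound hsound
      (fun _ _ hab => by gcongr) hker e hse hmeta hmin
    refine ⟨ehat, hsyn, (Nat.cast_le.2 (redW_sheet_le HX _ _)).trans (hred.trans_eq ?_)⟩
    push_cast
    ring
  · exact redW_residual_le_of_confined hCSS hconf hf (d - 1) e ebar ehat se shat he hse h0
      hshat hehat hrec (d - 2) (by omega)
  · have : (t : ℝ) ≤ d := by exact_mod_cast hdt.le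
    linarith
end

section
/- Stage-1 residual X error (Lemma 1): Let H ∈ 𝔽₂^{m×n}, M ∈ 𝔽₂^{r×m}, and A ∈ 𝔽₂^{a×n}. Assume that ker M equals the column space of H, and that H is (t,f)-sound relative to A with f : ℕ → ℝ monotone increasing. Let e ∈ 𝔽₂ⁿ with syndrome s = He, and let s_e ∈ 𝔽₂^m satisfy 2|s_e| ≤ t. Let ŝ ∈ 𝔽₂^m be any vector of minimum Hamming weight subject to M(s + s_e + ŝ) = 0. Then s_e + ŝ lies in the column space of H, and there exists ê ∈ 𝔽₂ⁿ with Hê = s + s_e + ŝ and ‖e + ê‖_A ≤ f(2|s_e|). In particular, when f(x) = x³/4 this yields ‖e + ê‖_A ≤ 2|s_e|³. -/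
open Matrix Kronecker

theorem exists_mulVec_eq_of_mulVec_eq_mulVec_add {m n R : Type*} [Fintype n] [Ring R]
    {H : Matrix m n R} {e e' : n → R} {v : m → R} (h : H *ᵥ e' = H *ᵥ e + v) :
    ∃ x, H *ᵥ x = v :=
  ⟨e' - e, by rw [mulVec_sub, h, add_sub_cancel_left]⟩

theorem hammingNorm_minimal_correction_le {m r : Type*} [Fintype m]
    {M : Matrix r m (ZMod 2)} {s se shat : m → ZMod 2} (hs : M *ᵥ s = 0)
    (hmin : ∀ s', M *ᵥ (s + se + s') = 0 → hammingNorm shat ≤ hammingNorm s') :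
    hammingNorm shat ≤ hammingNorm se :=
  hmin se (by rwa [add_assoc, ZModModule.add_self, add_zero])

theorem Sound.exists_redW_le {m n a : Type*} [Fintype m] [Fintype n] {t : ℕ} {f : ℕ → ℝ}
    {H : Matrix m n (ZMod 2)} {A : Matrix a n (ZMod 2)} (hsound : Sound t f H A)
    (hf : Monotone f) {s : m → ZMod 2} (hs : ∃ e, H *ᵥ e = s) {w : ℕ}
    (hsw : hammingNorm s ≤ w) (hwt : w ≤ t) :
    ∃ e, H *ᵥ e = s ∧ (redW A e : ℝ) ≤ f w := by
  obtain ⟨e, he, hred⟩ := hsound s hs (hsw.trans hwt)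
  exact ⟨e, he, hred.trans (hf hsw)⟩

theorem stage1_residual_X_error_general
    {m n r a : ℕ}
    (H : Matrix (Fin m) (Fin n) (ZMod 2))
    (M : Matrix (Fin r) (Fin m) (ZMod 2))
    (A : Matrix (Fin a) (Fin n) (ZMod 2))
    (hker : ∀ s : Fin m → ZMod 2, M.mulVec s = 0 ↔ ∃ e, H.mulVec e = s)
    (t : ℕ) (f : ℕ → ℝ) (hf : Monotone f)
    (hsound : Sound t f H A)
    (e : Fin n → ZMod 2) (se : Fin m → ZMod 2)
    (hse : 2 * hammingNorm se ≤ t)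
    (shat : Fin m → ZMod 2)
    (hshat : M.mulVec (H.mulVec e + se + shat) = 0)
    (hshat_min : ∀ s' : Fin m → ZMod 2,
      M.mulVec (H.mulVec e + se + s') = 0 → hammingNorm shat ≤ hammingNorm s') :
    (∃ e', H.mulVec e' = se + shat) ∧
    (∃ ehat, H.mulVec ehat = H.mulVec e + se + shat ∧
      (redW A (e + ehat) : ℝ) ≤ f (2 * hammingNorm se)) ∧
    ((∀ x : ℕ, f x = (x : ℝ) ^ 3 / 4) →
      ∃ ehat, H.mulVec ehat = H.mulVec e + se + shat ∧
        (redW A (e + ehat) : ℝ) ≤ 2 * (hammingNorm se : ℝ) ^ 3) := by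
  have hcol : ∃ e', H *ᵥ e' = se + shat := by
    obtain ⟨e', he'⟩ := (hker _).1 hshat
    exact exists_mulVec_eq_of_mulVec_eq_mulVec_add (he'.trans (add_assoc _ _ _))
  have hshat_le : hammingNorm shat ≤ hammingNorm se :=
    hammingNorm_minimal_correction_le ((hker _).2 ⟨e, rfl⟩) hshat_min
  have hweight : hammingNorm (se + shat) ≤ 2 * hammingNorm se := by
    have := hammingNorm_add_le se shat
    omega
  obtain ⟨e₀, he₀, hred⟩ := hsound.exists_redW_le hf hcol hweight hse
  have hresidual : ∃ ehat, H *ᵥ ehat = H *ᵥ e + se + shat ∧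
      (redW A (e + ehat) : ℝ) ≤ f (2 * hammingNorm se) :=
    ⟨e + e₀, by rw [mulVec_add, he₀, add_assoc], by
      rwa [← add_assoc, ZModModule.add_self, zero_add]⟩
  refine ⟨hcol, hresidual, fun hcube => ?_⟩
  obtain ⟨ehat, hsyn, hbound⟩ := hresidual
  refine ⟨ehat, hsyn, hbound.trans_eq ?_⟩
  rw [hcube]
  push_cast
  ring

theorem stage1_residual_X_error
    {m n r a : ℕ}
    (H : Matrix (Fin m) (Fin n) (ZMod 2))
    (M : Matrix (Fin r) (Fin m) (ZMod 2))
    (A : Matrix (Fin a) (Fin n) (ZMod 2))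
    (hker : ∀ s : Fin m → ZMod 2, M.mulVec s = 0 ↔ ∃ e, H.mulVec e = s)
    (t : ℕ) (ht : 0 < t) (f : ℕ → ℝ) (hf : Monotone f)
    (hsound : Sound t f H A)
    (e : Fin n → ZMod 2) (se : Fin m → ZMod 2)
    (hse : 2 * hammingNorm se ≤ t)
    (shat : Fin m → ZMod 2)
    (hshat : M.mulVec (H.mulVec e + se + shat) = 0)
    (hshat_min : ∀ s' : Fin m → ZMod 2,
      M.mulVec (H.mulVec e + se + s') = 0 → hammingNorm shat ≤ hammingNorm s') :
    (∃ e', H.mulVec e' = se + shat) ∧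
    (∃ ehat, H.mulVec ehat = H.mulVec e + se + shat ∧
      (redW A (e + ehat) : ℝ) ≤ f (2 * hammingNorm se)) ∧
    ((∀ x : ℕ, f x = (x : ℝ) ^ 3 / 4) →
      ∃ ehat, H.mulVec ehat = H.mulVec e + se + shat ∧
        (redW A (e + ehat) : ℝ) ≤ 2 * (hammingNorm se : ℝ) ^ 3) :=
  stage1_residual_X_error_general H M A hker t f hf hsound e se hse shat hshat hshat_min
end

section
/- Correctness of the error-free dimensional-collapse correction (Algorithm 1 with no external errors): Let H_X ∈ 𝔽₂^{m_X×n}, H_Z ∈ 𝔽₂^{m_Z×n}, and ℓ ≥ 2, and form the thickened matrix H̃_Z with the length-ℓ repetition code. Then every v ∈ rs(H̃_Z) satisfies Σ_{τ=1}^{ℓ} v^{(τ)} ∈ rs(H_Z). (Consequently, pushing the sheet components of any Z-stabilizer element of the thickened code onto the boundary sheet yields a Z-stabilizer element of the original code.) -/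
open Matrix Kronecker

/-!
Summing the sheets is a linear map, so it suffices to check the rows of `H̃_Z`. A row of the
block `H_Z ⊗ I_ℓ` lives on a single sheet and collapses to a row of `H_Z`. A row of the block
`I_n ⊗ h` is `e_j ⊗ h_k` on the sheets, which collapses to `e_j` times the sum of the entries of
`h_k`; that sum vanishes over `𝔽₂` because every row of `h` has exactly two ones.
-/

theorem sum_repH_apply_eq_zero {ℓ : ℕ} (k : Fin (ℓ - 1)) : ∑ τ : Fin ℓ, repH ℓ k τ = 0 := by
  have hk : k.val + 1 < ℓ := by omega
  have hrow : repH ℓ k = Pi.single ⟨k.val, by omega⟩ 1 + Pi.single ⟨k.val + 1, hk⟩ 1 := by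
    funext τ
    rcases τ with ⟨t, ht⟩
    by_cases h₁ : t = k.val <;> by_cases h₂ : t = k.val + 1 <;>
      simp [repH, Fin.ext_iff, h₁, h₂]
  simp only [hrow, Pi.add_apply, Finset.sum_add_distrib, Finset.sum_pi_single', Finset.mem_univ,
    if_true]
  decide

def collapse (n ℓ mX : ℕ) :
    ((Fin n × Fin ℓ) ⊕ (Fin mX × Fin (ℓ - 1)) → ZMod 2) →ₗ[ZMod 2] (Fin n → ZMod 2) where
  toFun v := ∑ τ : Fin ℓ, sheet (n := n) (mX := mX) τ v
  map_add' x y := by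
    simp only [← Finset.sum_add_distrib]
    rfl
  map_smul' c x := by
    simp only [Finset.smul_sum]
    rfl

theorem collapse_thickHZ_inl {mX mZ n : ℕ} (HX : Matrix (Fin mX) (Fin n) (ZMod 2))
    (HZ : Matrix (Fin mZ) (Fin n) (ZMod 2)) (ℓ : ℕ) (r : Fin mZ) (σ : Fin ℓ) :
    collapse n ℓ mX (thickHZ HX HZ ℓ (Sum.inl (r, σ))) = HZ r := by
  funext i
  simp [collapse, sheet, thickHZ, Matrix.one_apply]

theorem collapse_thickHZ_inr {mX mZ n : ℕ} (HX : Matrix (Fin mX) (Fin n) (ZMod 2))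
    (HZ : Matrix (Fin mZ) (Fin n) (ZMod 2)) (ℓ : ℕ) (j : Fin n) (k : Fin (ℓ - 1)) :
    collapse n ℓ mX (thickHZ HX HZ ℓ (Sum.inr (j, k))) = 0 := by
  funext i
  simp [collapse, sheet, thickHZ, Matrix.one_apply, sum_repH_apply_eq_zero]

theorem collapse_correction_error_free_general
    {mX mZ n : ℕ}
    (HX : Matrix (Fin mX) (Fin n) (ZMod 2))
    (HZ : Matrix (Fin mZ) (Fin n) (ZMod 2))
    (ℓ : ℕ) :
    ∀ v ∈ rowSpace (thickHZ HX HZ ℓ),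
      (∑ τ : Fin ℓ, sheet (n := n) (mX := mX) τ v) ∈ rowSpace HZ := by
  suffices rowSpace (thickHZ HX HZ ℓ) ≤ (rowSpace HZ).comap (collapse n ℓ mX) from
    fun v hv => this hv
  refine Submodule.span_le.mpr (Set.range_subset_iff.mpr ?_)
  rintro (⟨r, σ⟩ | ⟨j, k⟩)
  · rw [SetLike.mem_coe, Submodule.mem_comap, collapse_thickHZ_inl]
    exact Submodule.subset_span ⟨r, rfl⟩
  · rw [SetLike.mem_coe, Submodule.mem_comap, collapse_thickHZ_inr]
    exact Submodule.zero_mem _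

theorem collapse_correction_error_free
    {mX mZ n : ℕ}
    (HX : Matrix (Fin mX) (Fin n) (ZMod 2))
    (HZ : Matrix (Fin mZ) (Fin n) (ZMod 2))
    (ℓ : ℕ) (hℓ : 2 ≤ ℓ) :
    ∀ v ∈ rowSpace (thickHZ HX HZ ℓ),
      (∑ τ : Fin ℓ, sheet (n := n) (mX := mX) τ v) ∈ rowSpace HZ :=
  collapse_correction_error_free_general HX HZ ℓ
end

section
/- CSS orthogonality of the thickened code: Let H_X ∈ 𝔽₂^{m_X×n} and H_Z ∈ 𝔽₂^{m_Z×n} satisfy H_X·H_Zᵀ = 0, and let ℓ ≥ 2. Then the thickened check matrices satisfy H̃_X·H̃_Zᵀ = 0. -/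
open Matrix Kronecker

/-
Work blockwise. The product of the `H_X ⊗ I` column with the `H_Z ⊗ I` row is `(H_X H_Zᵀ) ⊗ I = 0`.
In the second block column, both `(H_X ⊗ I)(I ⊗ h)ᵀ` and `(I ⊗ hᵀ)(H_Xᵀ ⊗ I)ᵀ` equal `H_X ⊗ hᵀ`
by the mixed-product rule, so their sum vanishes in characteristic 2.
-/

namespace Matrix

variable {R l m n p q : Type*}

theorem transpose_kronecker [Mul R] (A : Matrix l m R) (B : Matrix n p R) :
    (A ⊗ₖ B)ᵀ = Aᵀ ⊗ₖ Bᵀ :=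
  (kroneckerMap_transpose _ A B).symm

theorem charTwo_add_self_eq_zero [Ring R] [CharP R 2] (M : Matrix m n R) : M + M = 0 := by
  ext
  exact CharTwo.add_self_eq_zero _

variable [CommSemiring R]

theorem kronecker_one_mul_transpose_kronecker_one [Fintype n] [Fintype p] [DecidableEq p]
    (A : Matrix l n R) (B : Matrix m n R) :
    A ⊗ₖ (1 : Matrix p p R) * (B ⊗ₖ (1 : Matrix p p R))ᵀ = (A * Bᵀ) ⊗ₖ (1 : Matrix p p R) := by
  rw [transpose_kronecker, transpose_one, ← mul_kronecker_mul, one_mul]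

theorem kronecker_one_mul_transpose_one_kronecker [Fintype n] [Fintype p] [DecidableEq n]
    [DecidableEq p] (A : Matrix l n R) (h : Matrix q p R) :
    A ⊗ₖ (1 : Matrix p p R) * ((1 : Matrix n n R) ⊗ₖ h)ᵀ = A ⊗ₖ hᵀ := by
  rw [transpose_kronecker, transpose_one, ← mul_kronecker_mul, Matrix.mul_one, Matrix.one_mul]

theorem one_kronecker_mul_transpose_kronecker_one [Fintype m] [Fintype q] [DecidableEq m]
    [DecidableEq q] (A : Matrix n m R) (g : Matrix p q R) :
    (1 : Matrix m m R) ⊗ₖ g * (A ⊗ₖ (1 : Matrix q q R))ᵀ = Aᵀ ⊗ₖ g := by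
  rw [transpose_kronecker, transpose_one, ← mul_kronecker_mul, Matrix.mul_one, Matrix.one_mul]

theorem fromCols_mul_transpose_fromBlocks_zero [Fintype m] [Fintype n] {o r : Type*}
    (P : Matrix l m R) (Q : Matrix l n R) (A : Matrix o m R) (C : Matrix r m R)
    (D : Matrix r n R) :
    fromCols P Q * (fromBlocks A (0 : Matrix o n R) C D)ᵀ =
      fromCols (P * Aᵀ) (P * Cᵀ + Q * Dᵀ) := by
  rw [fromBlocks_transpose, transpose_zero, fromCols_mul_fromBlocks, Matrix.mul_zero, add_zero]

end Matrix

theorem thick_css_orthogonality_general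
    {mX mZ n : ℕ}
    (HX : Matrix (Fin mX) (Fin n) (ZMod 2))
    (HZ : Matrix (Fin mZ) (Fin n) (ZMod 2))
    (hCSS : HX * HZᵀ = 0)
    (ℓ : ℕ) :
    thickHX HX ℓ * (thickHZ HX HZ ℓ)ᵀ = 0 := by
  rw [thickHX, thickHZ, fromCols_mul_transpose_fromBlocks_zero,
    kronecker_one_mul_transpose_kronecker_one, hCSS, zero_kronecker,
    kronecker_one_mul_transpose_one_kronecker, one_kronecker_mul_transpose_kronecker_one,
    transpose_transpose, charTwo_add_self_eq_zero, fromCols_zero]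

theorem thick_css_orthogonality
    {mX mZ n : ℕ}
    (HX : Matrix (Fin mX) (Fin n) (ZMod 2))
    (HZ : Matrix (Fin mZ) (Fin n) (ZMod 2))
    (hCSS : HX * HZᵀ = 0)
    (ℓ : ℕ) (hℓ : 2 ≤ ℓ) :
    thickHX HX ℓ * (thickHZ HX HZ ℓ)ᵀ = 0 :=
  thick_css_orthogonality_general HX HZ hCSS ℓ
end

section
/- Metacheck condition of the thickened code: Let H_X ∈ 𝔽₂^{m_X×n} and H_Z ∈ 𝔽₂^{m_Z×n} satisfy H_Z·H_Xᵀ = 0, and let ℓ ≥ 2. Then the metacheck matrix annihilates the thickened Z-check matrix: M̃_Z·H̃_Z = 0. -/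
open Matrix Kronecker

section Kronecker

variable {α l m n p : Type*} [CommSemiring α]

theorem one_kronecker_mul_kronecker_one [Fintype l] [Fintype p] [DecidableEq l] [DecidableEq p]
    (A : Matrix l m α) (B : Matrix n p α) :
    ((1 : Matrix l l α) ⊗ₖ B) * (A ⊗ₖ (1 : Matrix p p α)) = A ⊗ₖ B := by
  rw [← mul_kronecker_mul, Matrix.one_mul, Matrix.mul_one]

theorem kronecker_one_mul_one_kronecker [Fintype m] [Fintype n] [DecidableEq m] [DecidableEq n]
    (A : Matrix l m α) (B : Matrix n p α) :
    (A ⊗ₖ (1 : Matrix n n α)) * ((1 : Matrix m m α) ⊗ₖ B) = A ⊗ₖ B := by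
  rw [← mul_kronecker_mul, Matrix.one_mul, Matrix.mul_one]

/-- The two tensor factors commute, so in characteristic two they also anticommute: this is why
the thickened complex squares to zero without any signs. -/
theorem one_kronecker_mul_kronecker_one_add_kronecker_one_mul_one_kronecker_eq_zero
    {R : Type*} [CommRing R] [CharP R 2] [Fintype l] [Fintype m] [Fintype n] [Fintype p]
    [DecidableEq l] [DecidableEq m] [DecidableEq n] [DecidableEq p]
    (A : Matrix l m R) (B : Matrix n p R) :
    ((1 : Matrix l l R) ⊗ₖ B) * (A ⊗ₖ (1 : Matrix p p R)) +
      (A ⊗ₖ (1 : Matrix n n R)) * ((1 : Matrix m m R) ⊗ₖ B) = 0 := by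
  rw [one_kronecker_mul_kronecker_one, kronecker_one_mul_one_kronecker]
  ext i j
  exact CharTwo.add_self_eq_zero _

end Kronecker

theorem thick_metacheck_condition_general
    {mX mZ n : ℕ}
    (HX : Matrix (Fin mX) (Fin n) (ZMod 2))
    (HZ : Matrix (Fin mZ) (Fin n) (ZMod 2))
    (hCSS : HZ * HXᵀ = 0)
    (ℓ : ℕ) :
    metaMZ HZ ℓ * thickHZ HX HZ ℓ = 0 := by
  rw [metaMZ, thickHZ, fromCols_mul_fromBlocks, Matrix.mul_zero, zero_add,
    one_kronecker_mul_kronecker_one_add_kronecker_one_mul_one_kronecker_eq_zero,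
    ← mul_kronecker_mul, hCSS, zero_kronecker, fromCols_zero]

theorem thick_metacheck_condition
    {mX mZ n : ℕ}
    (HX : Matrix (Fin mX) (Fin n) (ZMod 2))
    (HZ : Matrix (Fin mZ) (Fin n) (ZMod 2))
    (hCSS : HZ * HXᵀ = 0)
    (ℓ : ℕ) (hℓ : 2 ≤ ℓ) :
    metaMZ HZ ℓ * thickHZ HX HZ ℓ = 0 :=
  thick_metacheck_condition_general HX HZ hCSS ℓ
end

section
/- Logical generators of the thickened code commute with its checks: Let H_X ∈ 𝔽₂^{m_X×n}, H_Z ∈ 𝔽₂^{m_Z×n}, ℓ ≥ 2, and let G_Z ∈ 𝔽₂^{k_Z×n}, G_X ∈ 𝔽₂^{k_X×n}, and g ∈ 𝔽₂^{k_g×ℓ} satisfy H_X·G_Zᵀ = 0, H_Z·G_Xᵀ = 0, and h·gᵀ = 0. Let u ∈ 𝔽₂^{1×ℓ} be the row vector with u₁ = 1 and all other entries 0, and define G̃_Z = ( G_Z⊗u | 0 ) and G̃_X = ( G_X⊗g | 0 ), where the zero blocks occupy the last m_X(ℓ−1) columns. Then H̃_X·G̃_Zᵀ = 0 and H̃_Z·G̃_Xᵀ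 = 0. -/
open Matrix Kronecker

section BlockProducts

variable {R : Type*} [CommSemiring R] {m n p k : Type*} [Fintype n] [Fintype p]

theorem Matrix.fromCols_mul_transpose_fromCols_zero (A : Matrix m n R) (B : Matrix m p R)
    (C : Matrix k n R) : fromCols A B * (fromCols C (0 : Matrix k p R))ᵀ = A * Cᵀ := by
  rw [transpose_fromCols, fromCols_mul_fromRows, transpose_zero, Matrix.mul_zero, add_zero]

theorem Matrix.fromBlocks_mul_transpose_fromCols_zero {q : Type*} (A : Matrix m n R)
    (B : Matrix m p R) (C : Matrix q n R) (D : Matrix q p R) (E : Matrix k n R) :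
    fromBlocks A B C D * (fromCols E (0 : Matrix k p R))ᵀ = fromRows (A * Eᵀ) (C * Eᵀ) := by
  rw [transpose_fromCols, fromBlocks_mul_fromRows, transpose_zero, Matrix.mul_zero,
    Matrix.mul_zero, add_zero, add_zero]

theorem Matrix.kronecker_mul_transpose_kronecker {m' n' k' : Type*} [Fintype n']
    (A : Matrix m n R) (B : Matrix m' n' R) (C : Matrix k n R) (D : Matrix k' n' R) :
    (A ⊗ₖ B) * (C ⊗ₖ D)ᵀ = (A * Cᵀ) ⊗ₖ (B * Dᵀ) := by
  rw [← kroneckerMap_transpose, mul_kronecker_mul]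

end BlockProducts

section ThickenedLogicals

variable {mX mZ n k κ : ℕ} {ℓ : ℕ}

theorem thickHX_mul_transpose_fromCols_kronecker_zero (HX : Matrix (Fin mX) (Fin n) (ZMod 2))
    (G : Matrix (Fin k) (Fin n) (ZMod 2)) (v : Matrix (Fin κ) (Fin ℓ) (ZMod 2)) :
    thickHX HX ℓ * (fromCols (G ⊗ₖ v) (0 : Matrix _ (Fin mX × Fin (ℓ - 1)) _))ᵀ
      = (HX * Gᵀ) ⊗ₖ vᵀ := by
  rw [thickHX, fromCols_mul_transpose_fromCols_zero, kronecker_mul_transpose_kronecker,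
    Matrix.one_mul]

theorem thickHZ_mul_transpose_fromCols_kronecker_zero (HX : Matrix (Fin mX) (Fin n) (ZMod 2))
    (HZ : Matrix (Fin mZ) (Fin n) (ZMod 2)) (G : Matrix (Fin k) (Fin n) (ZMod 2))
    (w : Matrix (Fin κ) (Fin ℓ) (ZMod 2)) :
    thickHZ HX HZ ℓ * (fromCols (G ⊗ₖ w) (0 : Matrix _ (Fin mX × Fin (ℓ - 1)) _))ᵀ
      = fromRows ((HZ * Gᵀ) ⊗ₖ wᵀ) (Gᵀ ⊗ₖ (repH ℓ * wᵀ)) := by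
  rw [thickHZ, fromBlocks_mul_transpose_fromCols_zero, kronecker_mul_transpose_kronecker,
    kronecker_mul_transpose_kronecker, Matrix.one_mul, Matrix.one_mul]

end ThickenedLogicals

theorem thick_logical_generators_commute_general
    {mX mZ n kZ kX kg : ℕ} (ℓ : ℕ)
    (HX : Matrix (Fin mX) (Fin n) (ZMod 2))
    (HZ : Matrix (Fin mZ) (Fin n) (ZMod 2))
    (GZ : Matrix (Fin kZ) (Fin n) (ZMod 2))
    (GX : Matrix (Fin kX) (Fin n) (ZMod 2))
    (g : Matrix (Fin kg) (Fin ℓ) (ZMod 2))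
    (h1 : HX * GZᵀ = 0) (h2 : HZ * GXᵀ = 0) (h3 : repH ℓ * gᵀ = 0)
    (u : Matrix (Fin 1) (Fin ℓ) (ZMod 2))
    (GZthick : Matrix (Fin kZ × Fin 1)
      ((Fin n × Fin ℓ) ⊕ (Fin mX × Fin (ℓ - 1))) (ZMod 2))
    (hGZthick : GZthick = Matrix.fromCols (GZ ⊗ₖ u) 0)
    (GXthick : Matrix (Fin kX × Fin kg)
      ((Fin n × Fin ℓ) ⊕ (Fin mX × Fin (ℓ - 1))) (ZMod 2))
    (hGXthick : GXthick = Matrix.fromCols (GX ⊗ₖ g) 0) :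
    thickHX HX ℓ * GZthickᵀ = 0 ∧ thickHZ HX HZ ℓ * GXthickᵀ = 0 := by
  subst hGZthick hGXthick
  rw [thickHX_mul_transpose_fromCols_kronecker_zero,
    thickHZ_mul_transpose_fromCols_kronecker_zero, h1, h2, h3, zero_kronecker, zero_kronecker,
    kronecker_zero, fromRows_zero]
  exact ⟨rfl, rfl⟩

theorem thick_logical_generators_commute
    {mX mZ n kZ kX kg : ℕ} (ℓ : ℕ) (hℓ : 2 ≤ ℓ)
    (HX : Matrix (Fin mX) (Fin n) (ZMod 2))
    (HZ : Matrix (Fin mZ) (Fin n) (ZMod 2))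
    (GZ : Matrix (Fin kZ) (Fin n) (ZMod 2))
    (GX : Matrix (Fin kX) (Fin n) (ZMod 2))
    (g : Matrix (Fin kg) (Fin ℓ) (ZMod 2))
    (h1 : HX * GZᵀ = 0) (h2 : HZ * GXᵀ = 0) (h3 : repH ℓ * gᵀ = 0)
    (u : Matrix (Fin 1) (Fin ℓ) (ZMod 2))
    (hu : u = Matrix.of fun _ i => if i.val = 0 then 1 else 0)
    (GZthick : Matrix (Fin kZ × Fin 1)
      ((Fin n × Fin ℓ) ⊕ (Fin mX × Fin (ℓ - 1))) (ZMod 2))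
    (hGZthick : GZthick = Matrix.fromCols (GZ ⊗ₖ u) 0)
    (GXthick : Matrix (Fin kX × Fin kg)
      ((Fin n × Fin ℓ) ⊕ (Fin mX × Fin (ℓ - 1))) (ZMod 2))
    (hGXthick : GXthick = Matrix.fromCols (GX ⊗ₖ g) 0) :
    thickHX HX ℓ * GZthickᵀ = 0 ∧ thickHZ HX HZ ℓ * GXthickᵀ = 0 :=
  thick_logical_generators_commute_general ℓ HX HZ GZ GX g h1 h2 h3 u GZthick hGZthick GXthick
    hGXthick
end

section
/- Dimension of hypergraph product codes: For all H₁ ∈ 𝔽₂^{m₁×n₁} and H₂ ∈ 𝔽₂^{m₂×n₂}, with r₁ = rank H₁ and r₂ = rank H₂, the HGP code satisfies rs(H_X) ⊆ ker H_Z and dim_{𝔽₂}( ker H_Z / rs(H_X) ) = (n₁−r₁)(n₂−r₂) + (m₁−r₁)(m₂−r₂), i.e. the number of logical qubits is k = k₁k₂ + k₁ᵀk₂ᵀ where kᵢ = nᵢ − rᵢ and kᵢᵀ = mᵢ − rᵢ. -/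
open Matrix Kronecker

/-- HGP X-check matrix `H_X = ( H₁⊗I_{n₂} | I_{m₁}⊗H₂ᵀ )`. -/
def hgpHX {m₁ n₁ m₂ n₂ : ℕ} (H₁ : Matrix (Fin m₁) (Fin n₁) (ZMod 2))
    (H₂ : Matrix (Fin m₂) (Fin n₂) (ZMod 2)) :
    Matrix (Fin m₁ × Fin n₂) ((Fin n₁ × Fin n₂) ⊕ (Fin m₁ × Fin m₂)) (ZMod 2) :=
  Matrix.fromCols (H₁ ⊗ₖ (1 : Matrix (Fin n₂) (Fin n₂) (ZMod 2)))
    ((1 : Matrix (Fin m₁) (Fin m₁) (ZMod 2)) ⊗ₖ H₂ᵀ)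

/-- HGP Z-check matrix `H_Z = ( I_{n₁}⊗H₂ | H₁ᵀ⊗I_{m₂} )`. -/
def hgpHZ {m₁ n₁ m₂ n₂ : ℕ} (H₁ : Matrix (Fin m₁) (Fin n₁) (ZMod 2))
    (H₂ : Matrix (Fin m₂) (Fin n₂) (ZMod 2)) :
    Matrix (Fin n₁ × Fin m₂) ((Fin n₁ × Fin n₂) ⊕ (Fin m₁ × Fin m₂)) (ZMod 2) :=
  Matrix.fromCols ((1 : Matrix (Fin n₁) (Fin n₁) (ZMod 2)) ⊗ₖ H₂)
    (H₁ᵀ ⊗ₖ (1 : Matrix (Fin m₂) (Fin m₂) (ZMod 2)))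


/-!
Over `𝔽₂`, `H_Z H_Xᵀ = H₁ᵀ ⊗ H₂ + H₁ᵀ ⊗ H₂ = 0`, so `rs(H_X) ⊆ ker H_Z` and
`k = n₁n₂ + m₁m₂ - rank H_Z - rank H_X`. Both ranks have the same shape: the column space of
`(A ⊗ I_q | I_p ⊗ B)` is `col A ⊗ 𝔽^q + 𝔽^p ⊗ col B`, and the two summands meet in
`col A ⊗ col B`, so its dimension is `r_A q + p r_B - r_A r_B`. Substituting the two ranks gives
`(n₁ - r₁)(n₂ - r₂) + (m₁ - r₁)(m₂ - r₂)`.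
-/

open Module Submodule

section TensorSubmodule

variable {F : Type*} [Field F] {α β ι : Type*}

/-- The copy of `K ⊗ L` inside `α × β → F`. -/
def tensorSubmodule (K : Submodule F (α → F)) (L : Submodule F (β → F)) :
    Submodule F (α × β → F) where
  carrier := {s | (∀ b, (fun a => s (a, b)) ∈ K) ∧ ∀ a, (fun b => s (a, b)) ∈ L}
  add_mem' hs ht := ⟨fun b => K.add_mem (hs.1 b) (ht.1 b), fun a => L.add_mem (hs.2 a) (ht.2 a)⟩
  zero_mem' := ⟨fun _ => K.zero_mem, fun _ => L.zero_mem⟩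
  smul_mem' c _ hs := ⟨fun b => K.smul_mem c (hs.1 b), fun a => L.smul_mem c (hs.2 a)⟩

@[simp]
lemma mem_tensorSubmodule {K : Submodule F (α → F)} {L : Submodule F (β → F)}
    {s : α × β → F} :
    s ∈ tensorSubmodule K L ↔ (∀ b, (fun a => s (a, b)) ∈ K) ∧ ∀ a, (fun b => s (a, b)) ∈ L :=
  Iff.rfl

lemma tensorSubmodule_top_inf_top_tensorSubmodule (K : Submodule F (α → F))
    (L : Submodule F (β → F)) :
    tensorSubmodule K ⊤ ⊓ tensorSubmodule ⊤ L = tensorSubmodule K L := by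
  ext s
  simp

variable [Fintype ι]

def sumOuter (u : ι → α → F) (L : Submodule F (β → F)) : (ι → L) →ₗ[F] (α × β → F) where
  toFun c p := ∑ i, u i p.1 * (c i : β → F) p.2
  map_add' c d := by ext p; simp [mul_add, Finset.sum_add_distrib]
  map_smul' r c := by ext p; simp [Finset.mul_sum, mul_left_comm]

@[simp]
lemma sumOuter_apply (u : ι → α → F) (L : Submodule F (β → F)) (c : ι → L) (a : α) (b : β) :
    sumOuter u L c (a, b) = ∑ i, u i a * (c i : β → F) b :=
  rfl

lemma sumOuter_injective {u : ι → α → F} (hu : LinearIndependent F u)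
    (L : Submodule F (β → F)) : Function.Injective (sumOuter u L) := by
  refine (injective_iff_map_eq_zero _).mpr fun c hc => ?_
  funext i
  ext b
  refine Fintype.linearIndependent_iff.mp hu (fun i => (c i : β → F) b) ?_ i
  funext a
  simpa [mul_comm] using congr_fun hc (a, b)

lemma range_sumOuter [Fintype α] {K : Submodule F (α → F)} (bK : Basis ι F K)
    (L : Submodule F (β → F)) :
    LinearMap.range (sumOuter (fun i => (bK i : α → F)) L) = tensorSubmodule K L := by
  classical
  refine le_antisymm ?_ fun s hs => ?_
  · rintro _ ⟨c, rfl⟩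
    refine ⟨fun b => ?_, fun a => ?_⟩
    · convert K.sum_mem (t := Finset.univ) fun i _ => K.smul_mem ((c i : β → F) b) (bK i).2
        using 1
      funext a
      simp [mul_comm]
    · convert L.sum_mem (t := Finset.univ) fun i _ => L.smul_mem ((bK i : α → F) a) (c i).2
        using 1
      funext b
      simp
  -- extending `bK.coord i` to all of `α → F` makes the `i`-th coordinate of the columns of `s`
  -- a linear combination of the rows of `s`, hence a vector of `L`
  choose φ hφ using fun i => LinearMap.exists_extend (bK.coord i)
  have hcoord : ∀ i, (fun b => φ i fun a => s (a, b)) ∈ L := fun i => by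
    convert L.sum_mem (t := Finset.univ) fun a _ =>
      L.smul_mem (φ i fun a' => if a = a' then 1 else 0) (hs.2 a) using 1
    funext b
    simp [LinearMap.pi_apply_eq_sum_univ (φ i) (fun a => s (a, b)), mul_comm]
  refine ⟨fun i => ⟨_, hcoord i⟩, funext fun ⟨a, b⟩ => ?_⟩
  have hcol := congr_arg (fun v : K => (v : α → F) a) (bK.sum_repr ⟨fun a => s (a, b), hs.1 b⟩)
  simp only [AddSubmonoidClass.coe_finsetSum, Submodule.coe_smul, Finset.sum_apply,
    Pi.smul_apply, smul_eq_mul] at hcol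
  rw [sumOuter_apply, ← hcol]
  refine Finset.sum_congr rfl fun i _ => ?_
  rw [mul_comm, ← bK.coord_apply, ← LinearMap.congr_fun (hφ i) ⟨_, hs.1 b⟩]
  rfl

theorem finrank_tensorSubmodule [Fintype α] (K : Submodule F (α → F))
    (L : Submodule F (β → F)) [FiniteDimensional F L] :
    finrank F (tensorSubmodule K L) = finrank F K * finrank F L := by
  let bK := Module.finBasis F K
  have hu : LinearIndependent F fun i => (bK i : α → F) :=
    bK.linearIndependent.map' K.subtype K.ker_subtype
  rw [← range_sumOuter bK L, LinearMap.finrank_range_of_inj (sumOuter_injective hu L),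
    Module.finrank_pi_fintype]
  simp

end TensorSubmodule

section Kronecker

variable {F : Type*} [Field F] {m n p q : Type*} [Fintype n] [Fintype p] [Fintype q]

lemma range_fromCols_mulVecLin [Fintype m] (A : Matrix m n F) (B : Matrix m p F) :
    LinearMap.range (fromCols A B).mulVecLin
      = LinearMap.range A.mulVecLin ⊔ LinearMap.range B.mulVecLin := by
  rw [Matrix.range_mulVecLin, Matrix.range_mulVecLin, Matrix.range_mulVecLin, ← span_union,
    ← Set.Sum.elim_range]
  congr 2
  funext j
  cases j <;> rfl

variable [DecidableEq p] [DecidableEq q]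

lemma kronecker_one_mulVec_apply (A : Matrix m n F) (v : n × q → F) (i : m) (k : q) :
    ((A ⊗ₖ (1 : Matrix q q F)) *ᵥ v) (i, k) = (A *ᵥ fun j => v (j, k)) i := by
  simp [Matrix.mulVec, dotProduct, Fintype.sum_prod_type, Matrix.one_apply]

lemma one_kronecker_mulVec_apply (B : Matrix m n F) (v : p × n → F) (k : p) (i : m) :
    (((1 : Matrix p p F) ⊗ₖ B) *ᵥ v) (k, i) = (B *ᵥ fun j => v (k, j)) i := by
  simp [Matrix.mulVec, dotProduct, Fintype.sum_prod_type, Matrix.one_apply]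

lemma range_kronecker_one_mulVecLin (A : Matrix m n F) :
    LinearMap.range (A ⊗ₖ (1 : Matrix q q F)).mulVecLin
      = tensorSubmodule (LinearMap.range A.mulVecLin) ⊤ := by
  refine le_antisymm ?_ fun s hs => ?_
  · rintro _ ⟨v, rfl⟩
    refine ⟨fun k => ⟨fun j => v (j, k), ?_⟩, fun _ => trivial⟩
    funext i
    exact (kronecker_one_mulVec_apply A v i k).symm
  · choose x hx using fun k => LinearMap.mem_range.mp (hs.1 k)
    refine ⟨fun jk => x jk.2 jk.1, funext fun ⟨i, k⟩ => ?_⟩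
    rw [Matrix.mulVecLin_apply, kronecker_one_mulVec_apply]
    exact congr_fun (hx k) i

lemma range_one_kronecker_mulVecLin (B : Matrix m n F) :
    LinearMap.range ((1 : Matrix p p F) ⊗ₖ B).mulVecLin
      = tensorSubmodule ⊤ (LinearMap.range B.mulVecLin) := by
  refine le_antisymm ?_ fun s hs => ?_
  · rintro _ ⟨v, rfl⟩
    refine ⟨fun _ => trivial, fun k => ⟨fun j => v (k, j), ?_⟩⟩
    funext i
    exact (one_kronecker_mulVec_apply B v k i).symm
  · choose x hx using fun k => LinearMap.mem_range.mp (hs.2 k)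
    refine ⟨fun kj => x kj.1 kj.2, funext fun ⟨k, i⟩ => ?_⟩
    rw [Matrix.mulVecLin_apply, one_kronecker_mulVec_apply]
    exact congr_fun (hx k) i

theorem finrank_range_kronecker_one_sup_one_kronecker [Fintype m] (A : Matrix p m F)
    (B : Matrix q n F) :
    finrank F ↥(LinearMap.range (A ⊗ₖ (1 : Matrix q q F)).mulVecLin
        ⊔ LinearMap.range ((1 : Matrix p p F) ⊗ₖ B).mulVecLin) + A.rank * B.rank
      = A.rank * Fintype.card q + Fintype.card p * B.rank := by
  have h := Submodule.finrank_sup_add_finrank_inf_eq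
    (LinearMap.range (A ⊗ₖ (1 : Matrix q q F)).mulVecLin)
    (LinearMap.range ((1 : Matrix p p F) ⊗ₖ B).mulVecLin)
  rw [range_kronecker_one_mulVecLin, range_one_kronecker_mulVecLin,
    tensorSubmodule_top_inf_top_tensorSubmodule, finrank_tensorSubmodule, finrank_tensorSubmodule,
    finrank_tensorSubmodule, finrank_top, finrank_top, Module.finrank_pi, Module.finrank_pi] at h
  rwa [range_kronecker_one_mulVecLin, range_one_kronecker_mulVecLin]

end Kronecker

lemma rank_add_finrank_ker_mulVecLin {F m n : Type*} [Field F] [Fintype n]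
    (A : Matrix m n F) : A.rank + finrank F (LinearMap.ker A.mulVecLin) = Fintype.card n :=
  A.mulVecLin.finrank_range_add_finrank_ker.trans (Module.finrank_pi F)

lemma rowSpace_le_ker_mulVecLin {m n p : Type*} [Fintype n] {A : Matrix m n (ZMod 2)}
    {B : Matrix p n (ZMod 2)} (h : B * Aᵀ = 0) : rowSpace A ≤ LinearMap.ker B.mulVecLin := by
  refine span_le.mpr ?_
  rintro _ ⟨i, rfl⟩
  ext k
  simpa [Matrix.mul_apply, Matrix.mulVec, dotProduct] using congr_fun (congr_fun h k) i

lemma finrank_rowSpace {m n : Type*} [Fintype m] [Fintype n] (A : Matrix m n (ZMod 2)) :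
    finrank (ZMod 2) (rowSpace A) = A.rank :=
  (rank_eq_finrank_span_row A).symm

lemma finrank_quotient_comap_subtype_add_finrank {K V : Type*} [DivisionRing K] [AddCommGroup V]
    [Module K V] [FiniteDimensional K V] {U W : Submodule K V} (h : U ≤ W) :
    finrank K (W ⧸ U.comap W.subtype) + finrank K U = finrank K W := by
  rw [← (comapSubtypeEquivOfLe h).finrank_eq, Submodule.finrank_quotient_add_finrank]

section HypergraphProduct

variable {m₁ n₁ m₂ n₂ : ℕ} (H₁ : Matrix (Fin m₁) (Fin n₁) (ZMod 2))
  (H₂ : Matrix (Fin m₂) (Fin n₂) (ZMod 2))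

lemma hgpHZ_mul_hgpHX_transpose : hgpHZ H₁ H₂ * (hgpHX H₁ H₂)ᵀ = 0 := by
  rw [hgpHX, hgpHZ, transpose_fromCols, fromCols_mul_fromRows, ← kroneckerMap_transpose,
    ← kroneckerMap_transpose, transpose_one, transpose_one, transpose_transpose,
    ← mul_kronecker_mul, ← mul_kronecker_mul, Matrix.one_mul, Matrix.mul_one, Matrix.one_mul,
    Matrix.mul_one]
  ext
  exact CharTwo.add_self_eq_zero _

lemma rank_hgpHX_add_rank_mul_rank :
    (hgpHX H₁ H₂).rank + H₁.rank * H₂.rank = H₁.rank * n₂ + m₁ * H₂.rank := by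
  have h := finrank_range_kronecker_one_sup_one_kronecker (q := Fin n₂) H₁ H₂ᵀ
  rwa [rank_transpose, Fintype.card_fin, Fintype.card_fin, ← range_fromCols_mulVecLin] at h

lemma rank_hgpHZ_add_rank_mul_rank :
    (hgpHZ H₁ H₂).rank + H₁.rank * H₂.rank = n₁ * H₂.rank + H₁.rank * m₂ := by
  have h := finrank_range_kronecker_one_sup_one_kronecker (p := Fin n₁) H₁ᵀ H₂
  rwa [rank_transpose, Fintype.card_fin, Fintype.card_fin, sup_comm, ← range_fromCols_mulVecLin,
    add_comm (H₁.rank * m₂)] at h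

end HypergraphProduct

theorem hgp_dimension
    {m₁ n₁ m₂ n₂ : ℕ}
    (H₁ : Matrix (Fin m₁) (Fin n₁) (ZMod 2))
    (H₂ : Matrix (Fin m₂) (Fin n₂) (ZMod 2)) :
    rowSpace (hgpHX H₁ H₂) ≤ LinearMap.ker (hgpHZ H₁ H₂).mulVecLin ∧
    Module.finrank (ZMod 2)
      (↥(LinearMap.ker (hgpHZ H₁ H₂).mulVecLin) ⧸
        Submodule.comap (LinearMap.ker (hgpHZ H₁ H₂).mulVecLin).subtype
          (rowSpace (hgpHX H₁ H₂))) =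
    (n₁ - H₁.rank) * (n₂ - H₂.rank) + (m₁ - H₁.rank) * (m₂ - H₂.rank) := by
  have hle := rowSpace_le_ker_mulVecLin (hgpHZ_mul_hgpHX_transpose H₁ H₂)
  refine ⟨hle, ?_⟩
  have hquot := finrank_quotient_comap_subtype_add_finrank hle
  have hker : (hgpHZ H₁ H₂).rank + finrank (ZMod 2) (LinearMap.ker (hgpHZ H₁ H₂).mulVecLin)
      = n₁ * n₂ + m₁ * m₂ := by
    simpa using rank_add_finrank_ker_mulVecLin (hgpHZ H₁ H₂)
  rw [finrank_rowSpace] at hquot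
  have hX := rank_hgpHX_add_rank_mul_rank H₁ H₂
  have hZ := rank_hgpHZ_add_rank_mul_rank H₁ H₂
  zify [H₁.rank_le_width, H₂.rank_le_width, H₁.rank_le_height, H₂.rank_le_height] at *
  linear_combination hquot + hker - hX - hZ
end
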